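/- arXiv:2511.17822 — 3 statements merged into one kernel-verified Lean document; each statement's English description precedes it below -/
import Mathlib

section
/- If y = x + h where x lies in the set A_i = {z : ⟨z, μ_i⟩ > ⟨z, μ_j⟩ for all j ≠ i}, the vectors μ_1,…,μ_l are pairwise β-separated (‖μ_i − μ_j‖ ≥ β for i ≠ j), and ‖h‖ ≤ β/2, then for every j ≠ i one has ‖y‖² < ‖y − μ_j + μ_i‖². In other words, the β/2-fattening of A_i is contained in the translated Voronoi cell R_i' = {z : ‖z‖² < ‖z − μ_j + μ_i‖² for all j ≠ i}. -/
open Finset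

/-- The β/2-fattening of A_i is contained in the translated Voronoi cell R_i'. -/
theorem fattening_subset_voronoi {d l : ℕ} (β : ℝ)
    (μ : Fin l → EuclideanSpace ℝ (Fin d))
    (hsep : ∀ i j, i ≠ j → β ≤ ‖μ i - μ j‖)
    (i : Fin l) (x h : EuclideanSpace ℝ (Fin d))
    (hx : ∀ j, j ≠ i → (inner ℝ x (μ j) : ℝ) < inner ℝ x (μ i))
    (hh : ‖h‖ ≤ β / 2) :
    ∀ j, j ≠ i → ‖x + h‖ ^ 2 < ‖x + h - μ j + μ i‖ ^ 2 := by
  intro j hj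
  have hv : β ≤ ‖μ i - μ j‖ := hsep i j (fun e => hj e.symm)
  have hx' := hx j hj
  have key : x + h - μ j + μ i = (x + h) + (μ i - μ j) := by abel
  rw [key]
  conv_rhs => rw [norm_add_sq_real]
  have h1 : |(inner ℝ h (μ i - μ j) : ℝ)| ≤ ‖h‖ * ‖μ i - μ j‖ := abs_real_inner_le_norm _ _
  have hx2 : (0:ℝ) < inner ℝ x (μ i - μ j) := by rw [inner_sub_right]; linarith
  have h2 : (inner ℝ (x + h) (μ i - μ j) : ℝ)
      = inner ℝ x (μ i - μ j) + inner ℝ h (μ i - μ j) := inner_add_left _ _ _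
  have hn : (0:ℝ) ≤ ‖h‖ := norm_nonneg h
  nlinarith [abs_le.1 h1, norm_nonneg (μ i - μ j)]
end

section
/- Let D be a probability measure on ℝ^d, α ∈ (0, 1/2], and suppose μ_1,…,μ_l ∈ ℝ^d are pairwise 10√(log(1/α))-separated points each of which is α-consistent with D (meaning the density of D pointwise dominates α times the density of N(μ_i, I)). Then l < 4/α. -/
open MeasureTheory Real

/-- Density of the `d`-dimensional Gaussian `N(μ, I)`. -/
noncomputable def gaussPdf (d : ℕ) (μ x : EuclideanSpace ℝ (Fin d)) : ℝ :=
  (2 * Real.pi) ^ (-(d : ℝ) / 2) * Real.exp (-‖x - μ‖ ^ 2 / 2)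

variable {d : ℕ}

lemma gaussPdf_nonneg (μ x : EuclideanSpace ℝ (Fin d)) : 0 ≤ gaussPdf d μ x := by
  unfold gaussPdf; positivity

lemma continuous_gaussPdf (μ : EuclideanSpace ℝ (Fin d)) : Continuous (gaussPdf d μ) := by
  unfold gaussPdf; fun_prop

lemma integrable_expNegSq : Integrable (fun x : EuclideanSpace ℝ (Fin d) => Real.exp (-‖x‖^2/2)) := by
  have h := (GaussianFourier.integrable_cexp_neg_mul_sq_norm_add (V := EuclideanSpace ℝ (Fin d))
    (b := (1/2 : ℂ)) (by norm_num) 0 0).norm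
  convert h using 2 with x
  simp [Complex.norm_exp, ← Complex.ofReal_pow]
  ring

lemma integral_expNegSq : ∫ x : EuclideanSpace ℝ (Fin d), Real.exp (-‖x‖^2/2) = (2*π)^((d:ℝ)/2) := by
  have h := GaussianFourier.integral_rexp_neg_mul_sq_norm (V := EuclideanSpace ℝ (Fin d)) (b := (1/2:ℝ)) (by norm_num)
  rw [finrank_euclideanSpace_fin] at h
  rw [show (fun x : EuclideanSpace ℝ (Fin d) => Real.exp (-‖x‖^2/2)) =
    (fun x : EuclideanSpace ℝ (Fin d) => Real.exp (-(1/2) * ‖x‖^2)) by funext x; ring_nf]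
  rw [h]
  congr 1
  rw [div_div_eq_mul_div, div_one, mul_comm]

lemma integrable_gaussPdf (μ : EuclideanSpace ℝ (Fin d)) : Integrable (gaussPdf d μ) := by
  unfold gaussPdf
  exact (integrable_expNegSq.comp_sub_right μ).const_mul _

lemma integral_gaussPdf (μ : EuclideanSpace ℝ (Fin d)) : ∫ x, gaussPdf d μ x = 1 := by
  unfold gaussPdf
  rw [MeasureTheory.integral_const_mul,
    integral_sub_right_eq_self (fun y : EuclideanSpace ℝ (Fin d) => Real.exp (-‖y‖^2/2)) μ,
    integral_expNegSq, ← Real.rpow_add (by positivity),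
    show (-(d:ℝ)/2 + (d:ℝ)/2) = 0 from by ring, Real.rpow_zero]

lemma sqrt_gaussPdf_mul (a b x : EuclideanSpace ℝ (Fin d)) :
    Real.sqrt (gaussPdf d a x * gaussPdf d b x)
      = Real.exp (-‖a - b‖^2/8) * gaussPdf d ((2:ℝ)⁻¹ • (a + b)) x := by
  have key : ‖x - a‖^2 + ‖x - b‖^2 = 2*‖x - (2:ℝ)⁻¹ • (a + b)‖^2 + ‖a - b‖^2/2 := by
    have hpar := parallelogram_law_with_norm ℝ (x - a) (x - b)
    have h1 : (x - a) + (x - b) = (2:ℝ) • (x - (2:ℝ)⁻¹ • (a + b)) := by module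
    have h2 : (x - a) - (x - b) = b - a := by abel
    rw [h1, h2, norm_smul, norm_sub_rev b a] at hpar
    simp only [Real.norm_ofNat, mul_pow] at hpar
    nlinarith [hpar]
  unfold gaussPdf
  set c := (2 * Real.pi) ^ (-(d : ℝ) / 2) with hc
  have hc0 : 0 ≤ c := by positivity
  rw [show c * Real.exp (-‖x - a‖ ^ 2 / 2) * (c * Real.exp (-‖x - b‖ ^ 2 / 2))
      = (c * c) * Real.exp (-‖x - a‖ ^ 2 / 2 + -‖x - b‖ ^ 2 / 2) from by rw [Real.exp_add]; ring,
    Real.sqrt_mul (by positivity), Real.sqrt_mul_self hc0,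
    show Real.exp (-‖x - a‖ ^ 2 / 2 + -‖x - b‖ ^ 2 / 2)
      = (Real.exp ((-‖x - a‖ ^ 2 / 2 + -‖x - b‖ ^ 2 / 2)/2))^2 from by
        rw [← Real.exp_nat_mul]; congr 1; push_cast; ring,
    Real.sqrt_sq (Real.exp_nonneg _),
    show (-‖x - a‖ ^ 2 / 2 + -‖x - b‖ ^ 2 / 2) / 2
      = -‖a - b‖ ^ 2 / 8 + -‖x - (2:ℝ)⁻¹ • (a + b)‖ ^ 2 / 2 from by nlinarith [key],
    Real.exp_add]
  ring

lemma key_sum {ι : Type*} [DecidableEq ι] (s : Finset ι) (hs : s.Nonempty) (a : ι → ℝ)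
    (ha : ∀ i, 0 ≤ a i) {α F : ℝ} (hα : 0 ≤ α) (hF : ∀ i ∈ s, α * a i ≤ F) :
    α * ∑ i ∈ s, a i ≤ F + α * ∑ p ∈ s.offDiag, Real.sqrt (a p.1 * a p.2) := by
  obtain ⟨k, hk, hmax⟩ := s.exists_max_image a hs
  have h1 : ∑ i ∈ s, a i = a k + ∑ i ∈ s.erase k, a i := (Finset.add_sum_erase s a hk).symm
  have h2 : ∀ i ∈ s.erase k, a i ≤ Real.sqrt (a i * a k) := by
    intro i hi
    have hik : a i ≤ a k := hmax i (Finset.mem_of_mem_erase hi)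
    calc a i = Real.sqrt (a i * a i) := (Real.sqrt_mul_self (ha i)).symm
      _ ≤ Real.sqrt (a i * a k) :=
        Real.sqrt_le_sqrt (mul_le_mul_of_nonneg_left hik (ha i))
  have h3 : ∑ i ∈ s.erase k, Real.sqrt (a i * a k)
      ≤ ∑ p ∈ s.offDiag, Real.sqrt (a p.1 * a p.2) := by
    have him : ∑ i ∈ s.erase k, Real.sqrt (a i * a k)
        = ∑ p ∈ (s.erase k).image (fun i => (i, k)), Real.sqrt (a p.1 * a p.2) := by
      rw [Finset.sum_image]
      intro i _ j _ hij
      exact (Prod.mk.injEq _ _ _ _ ▸ hij).1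
    rw [him]
    apply Finset.sum_le_sum_of_subset_of_nonneg
    · intro p hp
      simp only [Finset.mem_image] at hp
      obtain ⟨i, hi, rfl⟩ := hp
      exact Finset.mem_offDiag.mpr ⟨Finset.mem_of_mem_erase hi, hk, (Finset.mem_erase.mp hi).1⟩
    · intro _ _ _; exact Real.sqrt_nonneg _
  calc α * ∑ i ∈ s, a i = α * a k + α * ∑ i ∈ s.erase k, a i := by rw [h1]; ring
    _ ≤ F + α * ∑ p ∈ s.offDiag, Real.sqrt (a p.1 * a p.2) :=
      add_le_add (hF k hk)
        (mul_le_mul_of_nonneg_left ((Finset.sum_le_sum h2).trans h3) hα)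

set_option maxHeartbeats 1000000 in
/-- If μ₁,…,μ_l are pairwise 10√(log(1/α))-separated and each is α-consistent with a
probability density f, then l < 4/α. -/
theorem separated_consistent_list_small {d l : ℕ} (α : ℝ) (hα : 0 < α) (hα2 : α ≤ 1 / 2)
    (f : EuclideanSpace ℝ (Fin d) → ℝ)
    (hD : IsProbabilityMeasure
      (volume.withDensity fun x => ENNReal.ofReal (f x)))
    (μ : Fin l → EuclideanSpace ℝ (Fin d))
    (hsep : ∀ i j, i ≠ j → 10 * Real.sqrt (Real.log (1 / α)) ≤ ‖μ i - μ j‖)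
    (hcons : ∀ i, ∀ x, α * gaussPdf d (μ i) x ≤ f x) :
    (l : ℝ) < 4 / α := by
  by_contra hcon
  push_neg at hcon
  set m := ⌈(4:ℝ)/α⌉₊ with hm
  have hm_pos : 0 < m := Nat.ceil_pos.mpr (by positivity)
  have hm_le : m ≤ l := Nat.ceil_le.mpr hcon
  obtain ⟨s, -, hs_card⟩ := Finset.exists_subset_card_eq
    (by simpa using hm_le : m ≤ (Finset.univ : Finset (Fin l)).card)
  have hs_ne : s.Nonempty := Finset.card_pos.mp (by rw [hs_card]; exact hm_pos)
  set R : EuclideanSpace ℝ (Fin d) → ℝ := fun x => α * ∑ p ∈ s.offDiag,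
    Real.exp (-‖μ p.1 - μ p.2‖^2/8) * gaussPdf d ((2:ℝ)⁻¹ • (μ p.1 + μ p.2)) x with hR
  have hpt : ∀ x, α * ∑ i ∈ s, gaussPdf d (μ i) x ≤ f x + R x := by
    intro x
    have h := key_sum s hs_ne (fun i => gaussPdf d (μ i) x)
      (fun i => gaussPdf_nonneg _ _) hα.le (fun i _ => hcons i x)
    simp only [sqrt_gaussPdf_mul] at h
    exact h
  have hint_L : Integrable (fun x => α * ∑ i ∈ s, gaussPdf d (μ i) x) :=
    (integrable_finset_sum s (fun i _ => integrable_gaussPdf (μ i))).const_mul α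
  have hint_R : Integrable R :=
    (integrable_finset_sum _ (fun p _ => (integrable_gaussPdf _).const_mul _)).const_mul α
  have hIL : ∫ x, α * ∑ i ∈ s, gaussPdf d (μ i) x = α * m := by
    rw [MeasureTheory.integral_const_mul, integral_finset_sum s (fun i _ => integrable_gaussPdf _)]
    simp [integral_gaussPdf, hs_card]
  set Esum := ∑ p ∈ s.offDiag, Real.exp (-‖μ p.1 - μ p.2‖^2/8) with hE
  have hE0 : 0 ≤ Esum := Finset.sum_nonneg (fun p _ => (Real.exp_pos _).le)
  have hIR : ∫ x, R x = α * Esum := by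
    rw [hR, hE]
    rw [MeasureTheory.integral_const_mul,
      integral_finset_sum _ (fun p _ => (integrable_gaussPdf _).const_mul _)]
    simp [MeasureTheory.integral_const_mul, integral_gaussPdf]
  have hR0 : ∀ x, 0 ≤ R x := fun x => mul_nonneg hα.le (Finset.sum_nonneg
    (fun p _ => mul_nonneg (Real.exp_pos _).le (gaussPdf_nonneg _ _)))
  have hmeasR : Measurable (fun x => ENNReal.ofReal (R x)) := by
    apply Measurable.ennreal_ofReal
    apply Measurable.const_mul
    exact (Finset.measurable_sum _ (fun p _ =>
      ((continuous_gaussPdf _).measurable.const_mul _))) 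
  have hf1 : ∫⁻ x, ENNReal.ofReal (f x) = 1 := by
    have h := hD.measure_univ
    rwa [withDensity_apply _ MeasurableSet.univ, Measure.restrict_univ] at h
  have key1 : ENNReal.ofReal (α * m) ≤ 1 + ENNReal.ofReal (α * Esum) := by
    calc ENNReal.ofReal (α * m)
        = ∫⁻ x, ENNReal.ofReal (α * ∑ i ∈ s, gaussPdf d (μ i) x) := by
          rw [← hIL]
          exact ofReal_integral_eq_lintegral_ofReal hint_L
            (Filter.Eventually.of_forall fun x => mul_nonneg hα.le
              (Finset.sum_nonneg fun i _ => gaussPdf_nonneg _ _))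
      _ ≤ ∫⁻ x, (ENNReal.ofReal (f x) + ENNReal.ofReal (R x)) :=
          lintegral_mono fun x =>
            le_trans (ENNReal.ofReal_le_ofReal (hpt x)) ENNReal.ofReal_add_le
      _ = (∫⁻ x, ENNReal.ofReal (f x)) + ∫⁻ x, ENNReal.ofReal (R x) :=
          lintegral_add_right _ hmeasR
      _ = 1 + ENNReal.ofReal (α * Esum) := by
          rw [hf1, ← hIR,
            ← ofReal_integral_eq_lintegral_ofReal hint_R (Filter.Eventually.of_forall hR0)]
  have hreal : α * m ≤ 1 + α * Esum := by
    have h1 : (1:ENNReal) + ENNReal.ofReal (α * Esum) = ENNReal.ofReal (1 + α * Esum) := by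
      rw [ENNReal.ofReal_add (by norm_num) (mul_nonneg hα.le hE0), ENNReal.ofReal_one]
    rw [h1] at key1
    exact (ENNReal.ofReal_le_ofReal_iff (add_nonneg zero_le_one (mul_nonneg hα.le hE0))).mp key1
  -- bound each term of Esum
  have hL0 : 0 ≤ Real.log (1/α) :=
    Real.log_nonneg (one_le_one_div hα (le_trans hα2 (by norm_num)))
  have hterm : ∀ p ∈ s.offDiag, Real.exp (-‖μ p.1 - μ p.2‖^2/8) ≤ α ^ (25/2 : ℝ) := by
    intro p hp
    have hne : p.1 ≠ p.2 := (Finset.mem_offDiag.mp hp).2.2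
    have hδ := hsep p.1 p.2 hne
    have h0 : (0:ℝ) ≤ 10 * Real.sqrt (Real.log (1/α)) := by positivity
    have hδ2 : 100 * Real.log (1/α) ≤ ‖μ p.1 - μ p.2‖^2 := by
      nlinarith [Real.sq_sqrt hL0, hδ, h0]
    calc Real.exp (-‖μ p.1 - μ p.2‖^2/8) ≤ Real.exp (-(100 * Real.log (1/α))/8) :=
        Real.exp_le_exp.mpr (by linarith)
      _ = α ^ (25/2 : ℝ) := by
        rw [Real.rpow_def_of_pos hα]
        congr 1
        rw [one_div, Real.log_inv]
        ring
  have hEbound : Esum ≤ (m:ℝ)^2 * α ^ (25/2 : ℝ) := by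
    calc Esum ≤ ∑ _p ∈ s.offDiag, α ^ (25/2:ℝ) := Finset.sum_le_sum hterm
      _ = (s.offDiag.card : ℝ) * α ^ (25/2:ℝ) := by rw [Finset.sum_const, nsmul_eq_mul]
      _ ≤ (m:ℝ)^2 * α ^ (25/2:ℝ) := by
        apply mul_le_mul_of_nonneg_right _ (Real.rpow_nonneg hα.le _)
        have hcard : s.offDiag.card ≤ m^2 := by
          rw [Finset.offDiag_card, hs_card, pow_two]
          exact Nat.sub_le _ _
        calc (s.offDiag.card : ℝ) ≤ ((m^2 : ℕ) : ℝ) := Nat.cast_le.mpr hcard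
          _ = (m:ℝ)^2 := by push_cast; ring
  have hm_ge : 4/α ≤ (m:ℝ) := Nat.le_ceil _
  have hm_lt : (m:ℝ) < 4/α + 1 := Nat.ceil_lt_add_one (by positivity)
  have h4 : 4 ≤ α * m := by rw [div_le_iff₀ hα] at hm_ge; linarith
  have h5 : α * m ≤ 5 := by
    have := mul_lt_mul_of_pos_left hm_lt hα
    rw [mul_add, mul_div_cancel₀ _ (ne_of_gt hα)] at this
    nlinarith
  have hA : α^(25/2:ℝ) ≤ α^2 / 1024 := by
    have e1 : α^(25/2:ℝ) = α^2 * α^(21/2:ℝ) := by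
      rw [← Real.rpow_natCast α 2, ← Real.rpow_add hα]; norm_num
    have e2 : α^(21/2:ℝ) ≤ (1/2:ℝ)^(21/2:ℝ) :=
      Real.rpow_le_rpow hα.le hα2 (by norm_num)
    have e3 : (1/2:ℝ)^(21/2:ℝ) ≤ (1/2:ℝ)^(10:ℝ) :=
      Real.rpow_le_rpow_of_exponent_ge (by norm_num) (by norm_num) (by norm_num)
    have e4 : (1/2:ℝ)^(10:ℝ) = 1/1024 := by
      rw [show (10:ℝ)=((10:ℕ):ℝ) by norm_num, Real.rpow_natCast]; norm_num
    rw [e1]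
    nlinarith [sq_nonneg α]
  have t4 : (α*(m:ℝ))^2 ≤ 25 := by nlinarith [h4, h5]
  have hq : α * Esum ≤ 25 * α / 1024 := by
    calc α * Esum ≤ α * ((m:ℝ)^2 * α^(25/2:ℝ)) := mul_le_mul_of_nonneg_left hEbound hα.le
      _ ≤ α * ((m:ℝ)^2 * (α^2/1024)) :=
          mul_le_mul_of_nonneg_left (mul_le_mul_of_nonneg_left hA (sq_nonneg _)) hα.le
      _ = (α*(m:ℝ))^2 * (α/1024) := by ring
      _ ≤ 25 * (α/1024) := mul_le_mul_of_nonneg_right t4 (by positivity)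
      _ = 25 * α / 1024 := by ring
  linarith [hreal, hq, h4, hα2]
end

section
/- Let p_1,…,p_l be nonnegative reals summing to at most 1, and suppose Σ_{i=1}^l p_i · exp(a·√(log(1/p_i))) ≥ 2 where a > 0 (terms with p_i = 0 are interpreted as 0). Then for any b ≥ a, Σ_{i=1}^l p_i · exp(b·√(log(1/p_i))) ≥ 2^{b/a}. -/
open Finset

theorem Real.rpow_sum_mul_le_sum_mul_rpow_of_sum_le_one {ι : Type*} (s : Finset ι)
    (w z : ι → ℝ) (hw : ∀ i ∈ s, 0 ≤ w i) (hw' : ∑ i ∈ s, w i ≤ 1) (hz : ∀ i ∈ s, 0 ≤ z i)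
    {p : ℝ} (hp : 1 ≤ p) : (∑ i ∈ s, w i * z i) ^ p ≤ ∑ i ∈ s, w i * z i ^ p := by
  -- Put the missing mass `1 - ∑ w` at the point `0`, which contributes nothing on either side.
  have h := Real.rpow_arith_mean_le_arith_mean_rpow s.insertNone
    (fun o => o.elim (1 - ∑ i ∈ s, w i) w) (fun o => o.elim 0 z)
    (fun o _ => by cases o <;> simp_all [sub_nonneg]) (by simp [sum_insertNone])
    (fun o _ => by cases o <;> simp_all) hp
  simpa [sum_insertNone, Real.zero_rpow (by positivity : p ≠ 0)] using h

/-- Jensen/power-mean step: if Σ p_i ≤ 1 and Σ p_i·exp(a√(log(1/p_i))) ≥ 2,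
then for b ≥ a, Σ p_i·exp(b√(log(1/p_i))) ≥ 2^{b/a}. -/
theorem jensen_power_mean_step {l : ℕ} (p : Fin l → ℝ) (hp : ∀ i, 0 ≤ p i)
    (hsum : ∑ i : Fin l, p i ≤ 1) (a b : ℝ) (ha : 0 < a) (hab : a ≤ b)
    (h2 : 2 ≤ ∑ i : Fin l, p i * Real.exp (a * Real.sqrt (Real.log (1 / p i)))) :
    (2 : ℝ) ^ (b / a) ≤
      ∑ i : Fin l, p i * Real.exp (b * Real.sqrt (Real.log (1 / p i))) := by
  set s : Fin l → ℝ := fun i => Real.sqrt (Real.log (1 / p i))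
  have hq : 1 ≤ b / a := (one_le_div ha).2 hab
  have hexp : ∀ i, Real.exp (b * s i) = Real.exp (a * s i) ^ (b / a) := fun i => by
    rw [← Real.exp_mul, mul_comm a, mul_assoc, mul_div_cancel₀ _ ha.ne', mul_comm]
  calc (2 : ℝ) ^ (b / a)
      ≤ (∑ i, p i * Real.exp (a * s i)) ^ (b / a) := by gcongr
    _ ≤ ∑ i, p i * Real.exp (a * s i) ^ (b / a) :=
        Real.rpow_sum_mul_le_sum_mul_rpow_of_sum_le_one _ _ _ (fun i _ => hp i) hsum
          (fun i _ => (Real.exp_pos _).le) hq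
    _ = ∑ i, p i * Real.exp (b * s i) := by simp only [hexp]
end
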